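/- arXiv:2604.15028 — 3 statements merged into one kernel-verified Lean document; each statement's English description precedes it below -/
import Mathlib

section
/- For all positive reals k1 ≠ 1 and k2 > 0, the root β₁ = (A - B)/C, with A = k1^4 + 2*k1*k2 + 1, B = 2*sqrt((k1*k2+1)*(k1*k2+k1^4)), and C = (k1^2-1)^2, satisfies 0 < β₁ < 1. -/
theorem stmt_3 (k1 k2 : ℝ) (hk1 : 0 < k1) (hk2 : 0 < k2) (hne : k1 ≠ 1) :
    0 < ((k1 ^ 4 + 2 * k1 * k2 + 1) -
          2 * Real.sqrt ((k1 * k2 + 1) * (k1 * k2 + k1 ^ 4))) / (k1 ^ 2 - 1) ^ 2 ∧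
    ((k1 ^ 4 + 2 * k1 * k2 + 1) -
          2 * Real.sqrt ((k1 * k2 + 1) * (k1 * k2 + k1 ^ 4))) / (k1 ^ 2 - 1) ^ 2 < 1 := by
  set s := Real.sqrt ((k1 * k2 + 1) * (k1 * k2 + k1 ^ 4)) with hs
  have ht : 0 < k1 * k2 := mul_pos hk1 hk2
  have hu : 0 < k1 * k2 + 1 := by linarith
  have hv : 0 < k1 * k2 + k1 ^ 4 := by positivity
  have hs0 : 0 ≤ s := Real.sqrt_nonneg _
  have hs2 : s ^ 2 = (k1 * k2 + 1) * (k1 * k2 + k1 ^ 4) := by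
    rw [hs, Real.sq_sqrt (le_of_lt (mul_pos hu hv))]
  have hk1sq : k1 ^ 2 ≠ 1 := by
    intro h
    have : k1 = 1 := by nlinarith
    exact hne this
  have hC : 0 < (k1 ^ 2 - 1) ^ 2 := by
    have : k1 ^ 2 - 1 ≠ 0 := sub_ne_zero.mpr hk1sq
    positivity
  have hnum : 0 < (k1 ^ 4 + 2 * k1 * k2 + 1) - 2 * s := by
    nlinarith [sq_nonneg (k1 ^ 4 - 1), sq_nonneg s, sq_nonneg (k1 ^ 4 + 2 * k1 * k2 + 1 - 2 * s)]
  constructor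
  · exact div_pos hnum hC
  · rw [div_lt_one hC]
    have key : k1 * k2 + k1 ^ 2 < s := by
      nlinarith [sq_nonneg (s - (k1 * k2 + k1 ^ 2)), sq_nonneg k1]
    nlinarith
end

section
/- For all positive reals k1 ≠ 1 and k2 > 0, the root β₂ = (A + B)/C, with A = k1^4 + 2*k1*k2 + 1, B = 2*sqrt((k1*k2+1)*(k1*k2+k1^4)), and C = (k1^2-1)^2, satisfies β₂ > 1. -/
theorem stmt_4 (k1 k2 : ℝ) (hk1 : 0 < k1) (hk2 : 0 < k2) (hne : k1 ≠ 1) :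
    ((k1 ^ 4 + 2 * k1 * k2 + 1) +
        2 * Real.sqrt ((k1 * k2 + 1) * (k1 * k2 + k1 ^ 4))) / (k1 ^ 2 - 1) ^ 2 > 1 := by
  have h : k1 ^ 2 - 1 ≠ 0 := by
    intro h
    exact hne (by nlinarith)
  have hC : (0:ℝ) < (k1 ^ 2 - 1) ^ 2 := pow_pos (abs_pos.mpr h) 2 |>.trans_eq (sq_abs _)
  rw [gt_iff_lt, lt_div_iff₀ hC]
  have hs : 0 ≤ Real.sqrt ((k1 * k2 + 1) * (k1 * k2 + k1 ^ 4)) := Real.sqrt_nonneg _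
  nlinarith [mul_pos hk1 hk2, sq_nonneg k1]
end

section
/- Let k1, k2 > 0 and consider the relieved quadratic form matrix U(β) = [[2(k1 + k1²k2)β, (k1² + 2k1k2 + 1)β − k1² − 1], [(k1² + 2k1k2 + 1)β − k1² − 1, 2((k1+k2)β − k1)]] (a symmetric 2×2 real matrix depending on β ∈ ℝ). If β > 0 and −(k1²−1)²β² + (2k1⁴ + 4k1k2 + 2)β − (k1²+1)² > 0, then U(β) is positive definite. -/
open Matrix

section BinaryQuadraticForm

variable {R : Type*} [CommRing R] [LinearOrder R] [IsStrictOrderedRing R]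

theorem binary_quadratic_pos {a b c x y : R} (ha : 0 < a) (hdet : 0 < a * c - b ^ 2)
    (hxy : x ≠ 0 ∨ y ≠ 0) : 0 < a * x ^ 2 + 2 * b * x * y + c * y ^ 2 := by
  rcases eq_or_ne y 0 with rfl | hy
  · have hx : x ≠ 0 := hxy.resolve_right (not_not.mpr rfl)
    simpa using mul_pos ha (sq_pos_of_ne_zero hx)
  · have complete_square : a * (a * x ^ 2 + 2 * b * x * y + c * y ^ 2) =
        (a * x + b * y) ^ 2 + (a * c - b ^ 2) * y ^ 2 := by ring
    have hprod : 0 < a * (a * x ^ 2 + 2 * b * x * y + c * y ^ 2) := by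
      rw [complete_square]
      exact add_pos_of_nonneg_of_pos (sq_nonneg _) (mul_pos hdet (sq_pos_of_ne_zero hy))
    exact pos_of_mul_pos_right hprod ha.le

theorem Matrix.posDef_fin_two_of_pos_of_det_pos [StarRing R] [TrivialStar R] {a b c : R}
    (ha : 0 < a) (hdet : 0 < a * c - b ^ 2) : !![a, b; b, c].PosDef := by
  refine .of_dotProduct_mulVec_pos ?_ fun x hx => ?_
  · refine IsHermitian.ext fun i j => ?_
    fin_cases i <;> fin_cases j <;> simp
  · have hxy : x 0 ≠ 0 ∨ x 1 ≠ 0 := by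
      contrapose! hx
      ext i; fin_cases i <;> simp [hx]
    convert binary_quadratic_pos ha hdet hxy using 1
    simp only [dotProduct, Pi.star_apply, star_trivial, mulVec, of_apply, cons_val',
      cons_val_fin_one, Fin.sum_univ_two, cons_val_zero, cons_val_one]
    ring

end BinaryQuadraticForm

theorem stmt_19 (k1 k2 β : ℝ) (hk1 : 0 < k1) (hk2 : 0 < k2) (hβ : 0 < β)
    (hquad : -(k1 ^ 2 - 1) ^ 2 * β ^ 2 + (2 * k1 ^ 4 + 4 * k1 * k2 + 2) * β -
        (k1 ^ 2 + 1) ^ 2 > 0) :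
    (!![2 * (k1 + k1 ^ 2 * k2) * β, (k1 ^ 2 + 2 * k1 * k2 + 1) * β - k1 ^ 2 - 1;
        (k1 ^ 2 + 2 * k1 * k2 + 1) * β - k1 ^ 2 - 1,
        2 * ((k1 + k2) * β - k1)] : Matrix (Fin 2) (Fin 2) ℝ).PosDef := by
  -- `hquad` is the determinant of the matrix, expanded as a polynomial in `β`.
  exact posDef_fin_two_of_pos_of_det_pos (by positivity) (hquad.trans_eq (by ring))
end
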